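/- For w ∈ R^p, let τ(I_p + ww') be the unique lower triangular matrix with positive diagonal satisfying I_p + ww' = τ(I_p+ww') τ(I_p+ww')'. Then the modular function evaluated at this matrix satisfies Δ(τ(I_p + ww')) = ψ_p(w), where ψ_p(w) = (1 + w'w)^{-(p-1)/2} ∏_{i=1}^{p-1} (1 + w_1^2 + ... + w_i^2) for p ≥ 2 and ψ_1(w) = 1. -/

import Mathlib

open Matrix Finset

/-- `T` is lower triangular with strictly positive diagonal entries. -/
def IsLowerPos {p : ℕ} (T : Matrix (Fin p) (Fin p) ℝ) : Prop :=
  (∀ i, 0 < T i i) ∧ ∀ i j, i < j → T i j = 0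

/-- The modular function `Δ(g) = ∏_{i=1}^p g_{ii}^{p - 2i + 1}` on `G_T^+`. -/
noncomputable def Δ {p : ℕ} (g : Matrix (Fin p) (Fin p) ℝ) : ℝ :=
  ∏ i : Fin p, (g i i) ^ ((p : ℤ) - 2 * ((i : ℤ) + 1) + 1)

/-- `ψ_p(w) = (1 + w'w)^{-(p-1)/2} ∏_{i=1}^{p-1} (1 + w_1² + ⋯ + w_i²)`
for `p ≥ 2`, and `ψ_1 ≡ 1` (the formula below reduces to `1` when `p = 1`). -/
noncomputable def ψ {p : ℕ} (w : Fin p → ℝ) : ℝ :=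
  (1 + ∑ i, w i ^ 2) ^ (-(((p : ℝ) - 1) / 2)) *
    ∏ i ∈ Finset.range (p - 1),
      (1 + ∑ j ∈ Finset.univ.filter (fun j : Fin p => (j : ℕ) ≤ i), w j ^ 2)

/-!
If `I + w wᵀ = T Tᵀ` with `T` lower triangular, then the leading `k × k` block of `T Tᵀ` is
`T_k T_kᵀ`, where `T_k` is the leading block of `T`. Taking determinants, `P_k := ∏_{i<k} T_ii`
satisfies `P_k² = det (I_k + w_{<k} w_{<k}ᵀ) = 1 + w_1² + ⋯ + w_k²` by the matrix determinant
lemma. Since `T_ii = P_{i+1} / P_i`, the product `Δ(T)` telescopes to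
`P_p^{-(p-1)} ∏_{k<p} P_k²`, which is `ψ_p(w)`.
-/

namespace Matrix

variable {ι R : Type*} [CommRing R]

theorem det_one_add_vecMulVec [Fintype ι] [DecidableEq ι] (u v : ι → R) :
    (1 + vecMulVec u v).det = 1 + v ⬝ᵥ u := by
  rw [vecMulVec_eq Unit, det_one_add_replicateCol_mul_replicateRow]

theorem det_submatrix_one_add_vecMulVec [DecidableEq ι] (u v : ι → R) (s : Finset ι) :
    ((1 + vecMulVec u v).submatrix (Subtype.val : s → ι) (Subtype.val : s → ι)).det
      = 1 + ∑ i ∈ s, v i * u i := by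
  have hsub : (1 + vecMulVec u v).submatrix (Subtype.val : s → ι) (Subtype.val : s → ι)
      = 1 + vecMulVec (u ∘ Subtype.val) (v ∘ Subtype.val) := by
    rw [← submatrix_one _ Subtype.val_injective]
    rfl
  rw [hsub, det_one_add_vecMulVec]
  exact congrArg (1 + ·) (sum_coe_sort s fun i => v i * u i)

variable [LinearOrder ι]

theorem IsLowerTriangular.det_submatrix {A : Matrix ι ι R} (hA : A.IsLowerTriangular)
    (s : Finset ι) :
    (A.submatrix (Subtype.val : s → ι) (Subtype.val : s → ι)).det = ∏ i ∈ s, A i i := by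
  rw [det_of_isLowerTriangular _ (BlockTriangular.submatrix (f := (Subtype.val : s → ι)) hA)]
  exact prod_coe_sort s fun i => A i i

theorem IsLowerTriangular.submatrix_mul [Fintype ι] {A B : Matrix ι ι R}
    (hA : A.IsLowerTriangular) {s : Finset ι} (hs : IsLowerSet (s : Set ι)) :
    (A * B).submatrix (Subtype.val : s → ι) (Subtype.val : s → ι)
      = A.submatrix (Subtype.val : s → ι) (Subtype.val : s → ι)
        * B.submatrix (Subtype.val : s → ι) (Subtype.val : s → ι) := by
  ext i j
  simp only [submatrix_apply, mul_apply]
  calc ∑ l, A i l * B l j = ∑ l ∈ s, A i l * B l j := by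
        refine (sum_subset (subset_univ s) fun l _ hl => ?_).symm
        have hil : (i : ι) < l := lt_of_not_ge fun hli => hl (hs hli i.2)
        rw [hA hil, zero_mul]
    _ = _ := (sum_coe_sort s _).symm

theorem sq_prod_diag_of_one_add_vecMulVec_eq_mul_transpose [Fintype ι] {T : Matrix ι ι R}
    (hT : T.IsLowerTriangular) {w : ι → R} (hfac : 1 + vecMulVec w w = T * Tᵀ)
    {s : Finset ι} (hs : IsLowerSet (s : Set ι)) :
    (∏ i ∈ s, T i i) ^ 2 = 1 + ∑ i ∈ s, w i ^ 2 := by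
  calc (∏ i ∈ s, T i i) ^ 2
      = ((T * Tᵀ).submatrix (Subtype.val : s → ι) (Subtype.val : s → ι)).det := by
        rw [IsLowerTriangular.submatrix_mul hT hs, det_mul, ← transpose_submatrix, det_transpose,
          IsLowerTriangular.det_submatrix hT, sq]
    _ = 1 + ∑ i ∈ s, w i ^ 2 := by
        simp only [← hfac, det_submatrix_one_add_vecMulVec, sq]

end Matrix

theorem prod_range_div_zpow_telescope {K : Type*} [Field K] (f : ℕ → K) (hf : ∀ n, f n ≠ 0)
    (hf0 : f 0 = 1) (m : ℕ) :
    ∏ n ∈ range (m + 1), (f (n + 1) / f n) ^ ((m : ℤ) - 2 * n)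
      = (∏ n ∈ range m, f (n + 1) ^ 2) * f (m + 1) ^ (-(m : ℤ)) := by
  have hshift : ∀ n ∈ range m, f (n + 1) ^ ((m : ℤ) - 2 * n)
      = f (n + 1) ^ 2 * f (n + 1) ^ ((m : ℤ) - 2 * (n + 1 : ℕ)) := by
    intro n _
    rw [← zpow_natCast, ← zpow_add₀ (hf _)]
    push_cast; ring_nf
  have hne : ∏ n ∈ range m, f (n + 1) ^ ((m : ℤ) - 2 * (n + 1 : ℕ)) ≠ 0 :=
    prod_ne_zero_iff.mpr fun n _ => zpow_ne_zero _ (hf _)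
  simp only [div_zpow, prod_div_distrib]
  rw [prod_range_succ, prod_range_succ', prod_congr rfl hshift, prod_mul_distrib, hf0,
    _root_.one_zpow, mul_one, mul_right_comm, mul_div_assoc, div_self hne, mul_one]
  ring_nf

def leadingIndices (p k : ℕ) : Finset (Fin p) :=
  univ.filter fun j => (j : ℕ) < k

theorem isLowerSet_leadingIndices (p k : ℕ) : IsLowerSet (leadingIndices p k : Set (Fin p)) :=
  fun _ _ hij hi => by
    simp only [leadingIndices, coe_filter, mem_univ, true_and, Set.mem_ofPred_eq] at hi ⊢
    exact lt_of_le_of_lt hij hi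

theorem leadingIndices_zero (p : ℕ) : leadingIndices p 0 = ∅ := by
  simp [leadingIndices]

theorem prod_leadingIndices_succ {p : ℕ} {M : Type*} [CommMonoid M] (f : Fin p → M)
    (i : Fin p) :
    ∏ j ∈ leadingIndices p (i + 1), f j = f i * ∏ j ∈ leadingIndices p i, f j := by
  have hinsert : leadingIndices p (i + 1) = insert i (leadingIndices p i) := by
    ext j
    simp [leadingIndices, le_iff_eq_or_lt, Fin.val_eq_val]
  rw [hinsert, prod_insert (by simp [leadingIndices])]

theorem IsLowerPos.isLowerTriangular {p : ℕ} {T : Matrix (Fin p) (Fin p) ℝ}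
    (hT : IsLowerPos T) : T.IsLowerTriangular :=
  fun i j hij => hT.2 i j hij

theorem Δ_eq_prod_range {m : ℕ} {T : Matrix (Fin (m + 1)) (Fin (m + 1)) ℝ} {P : ℕ → ℝ}
    (hdiag : ∀ i : Fin (m + 1), T i i = P (i + 1) / P i) :
    Δ T = ∏ n ∈ range (m + 1), (P (n + 1) / P n) ^ ((m : ℤ) - 2 * n) := by
  rw [Δ, ← Fin.prod_univ_eq_prod_range (fun n => (P (n + 1) / P n) ^ ((m : ℤ) - 2 * n))]
  refine prod_congr rfl fun i _ => ?_
  rw [hdiag]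
  congr 1
  push_cast
  ring

theorem ψ_eq_of_sq_eq {m : ℕ} {w : Fin (m + 1) → ℝ} {P : ℕ → ℝ} (hP : ∀ k, 0 ≤ P k)
    (hP_sq : ∀ k, P k ^ 2 = 1 + ∑ j ∈ leadingIndices (m + 1) k, w j ^ 2) :
    ψ w = (∏ n ∈ range m, P (n + 1) ^ 2) * P (m + 1) ^ (-(m : ℤ)) := by
  have htotal : 1 + ∑ i, w i ^ 2 = P (m + 1) ^ 2 := by
    rw [hP_sq, leadingIndices, filter_true_of_mem fun j _ => j.isLt]
  have hpartial : ∀ n : ℕ,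
      1 + ∑ j ∈ univ.filter (fun j : Fin (m + 1) => (j : ℕ) ≤ n), w j ^ 2
        = P (n + 1) ^ 2 := by
    intro n
    simp only [hP_sq, leadingIndices, Nat.lt_succ_iff]
  rw [ψ, htotal, mul_comm, Nat.add_sub_cancel]
  simp only [hpartial]
  congr 1
  rw [← Real.rpow_natCast, ← Real.rpow_mul (hP _), ← Real.rpow_intCast]
  push_cast
  ring_nf

theorem modular_of_cholesky_one_add_vecMulVec_general {p : ℕ}
    (w : Fin p → ℝ) (T : Matrix (Fin p) (Fin p) ℝ) (hT : IsLowerPos T)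
    (hfac : (1 : Matrix (Fin p) (Fin p) ℝ) + vecMulVec w w = T * Tᵀ) :
    Δ T = ψ w := by
  rcases p with _ | m
  · simp [Δ, ψ]
  set P : ℕ → ℝ := fun k => ∏ j ∈ leadingIndices (m + 1) k, T j j with hP
  have hP_pos : ∀ k, 0 < P k := fun k => prod_pos fun j _ => hT.1 j
  have hP_sq : ∀ k, P k ^ 2 = 1 + ∑ j ∈ leadingIndices (m + 1) k, w j ^ 2 := fun k =>
    sq_prod_diag_of_one_add_vecMulVec_eq_mul_transpose hT.isLowerTriangular hfac
      (isLowerSet_leadingIndices _ k)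
  have hdiag : ∀ i : Fin (m + 1), T i i = P (i + 1) / P i := fun i => by
    rw [eq_div_iff (hP_pos i).ne']
    exact (prod_leadingIndices_succ (fun j => T j j) i).symm
  rw [Δ_eq_prod_range hdiag, prod_range_div_zpow_telescope P (fun n => (hP_pos n).ne')
    (by simp [hP, leadingIndices_zero]), ψ_eq_of_sq_eq (fun k => (hP_pos k).le) hP_sq]

/-- If `T = τ(I_p + ww')` is the Cholesky factor of `I_p + ww'` (the unique
lower triangular matrix with positive diagonal such that `I_p + ww' = T T'`),
then `Δ(T) = ψ_p(w)`. -/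
theorem modular_of_cholesky_one_add_vecMulVec {p : ℕ} (hp : 1 ≤ p)
    (w : Fin p → ℝ) (T : Matrix (Fin p) (Fin p) ℝ) (hT : IsLowerPos T)
    (hfac : (1 : Matrix (Fin p) (Fin p) ℝ) + vecMulVec w w = T * Tᵀ) :
    Δ T = ψ w :=
  modular_of_cholesky_one_add_vecMulVec_general w T hT hfac
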